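/- There is no finite simple nonabelian group G whose same-size conjugacy class set is {1, p², 4p², 8p²} for some prime p. -/
import Mathlib

open scoped MatrixGroups

/-- The size of the conjugacy class of `x`. -/
noncomputable def classSize {G : Type*} [Group G] (x : G) : ℕ :=
  Nat.card {y : G // IsConj x y}

/-- `u_G(n)`: the number of elements of `G` whose conjugacy class has size `n`. -/
noncomputable def sameSizeCount (G : Type*) [Group G] (n : ℕ) : ℕ :=
  Nat.card {x : G // classSize x = n}

/-- `U(G)`: the same-size conjugacy class set of `G`. -/
def sameSizeSet (G : Type*) [Group G] : Set ℕ :=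
  {m | ∃ x : G, m = sameSizeCount G (classSize x)}

section Aux

variable {G : Type*} [Group G]

lemma classSize_eq_card_orbit (x : G) :
    classSize x = Nat.card (MulAction.orbit (ConjAct G) x) := by
  apply Nat.card_congr
  exact Equiv.subtypeEquivRight fun y => by
    rw [ConjAct.mem_orbit_conjAct, isConj_comm]

lemma classSize_dvd [Finite G] (x : G) : classSize x ∣ Nat.card G := by
  classical
  haveI := Fintype.ofFinite G
  rw [classSize_eq_card_orbit, Nat.card_eq_fintype_card, Nat.card_eq_fintype_card]
  exact ⟨_, (MulAction.card_orbit_mul_card_stabilizer_eq_card_group (ConjAct G) x).symm⟩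

lemma classSize_conj {x y : G} (h : IsConj x y) : classSize x = classSize y :=
  Nat.card_congr <| Equiv.subtypeEquivRight fun _ =>
    ⟨fun hz => h.symm.trans hz, fun hz => h.trans hz⟩

lemma classSize_eq_filter_card [Fintype G] [DecidableEq G] (x : G) :
    classSize x = (Finset.univ.filter fun y => IsConj x y).card := by
  classical
  rw [classSize, Nat.card_eq_fintype_card, Fintype.card_subtype]

lemma sameSizeCount_eq_filter_card [Fintype G] [DecidableEq G] (n : ℕ) :
    sameSizeCount G n = (Finset.univ.filter fun x : G => classSize x = n).card := by
  classical
  rw [sameSizeCount, Nat.card_eq_fintype_card, Fintype.card_subtype]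

lemma classSize_one : classSize (1 : G) = 1 := by
  rw [classSize]
  have : ∀ y : G, IsConj 1 y ↔ y = 1 := fun _ => isConj_one_right
  rw [Nat.card_congr (Equiv.subtypeEquivRight this)]
  simp

lemma eq_one_of_classSize_eq_one [Finite G]
    (hc : Subgroup.center G = ⊥) {x : G} (h : classSize x = 1) : x = 1 := by
  classical
  haveI := Fintype.ofFinite G
  rw [classSize_eq_filter_card] at h
  obtain ⟨a, ha⟩ := Finset.card_eq_one.mp h
  have hx : x ∈ Finset.univ.filter fun y => IsConj x y :=
    Finset.mem_filter.mpr ⟨Finset.mem_univ x, IsConj.refl x⟩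
  rw [ha, Finset.mem_singleton] at hx
  have hcen : x ∈ Subgroup.center G := by
    rw [Subgroup.mem_center_iff]
    intro g
    have hg : g * x * g⁻¹ ∈ Finset.univ.filter fun y => IsConj x y := by
      simp only [Finset.mem_filter, Finset.mem_univ, true_and]
      exact isConj_iff.mpr ⟨g, rfl⟩
    rw [ha, Finset.mem_singleton, ← hx] at hg
    have := hg
    calc g * x = (g * x * g⁻¹) * g := by group
    _ = x * g := by rw [this, hx]
  rw [hc] at hcen
  exact hcen

/-- Each same-size count is divisible by the class size. -/
lemma classSize_dvd_sameSizeCount [Finite G] (x : G) :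
    classSize x ∣ sameSizeCount G (classSize x) := by
  classical
  haveI := Fintype.ofFinite G
  set n := classSize x with hn
  rw [sameSizeCount_eq_filter_card]
  set F := Finset.univ.filter fun y : G => classSize y = n with hF
  have hcard : F.card = ∑ q ∈ F.image ConjClasses.mk,
      (F.filter fun y => ConjClasses.mk y = q).card :=
    Finset.card_eq_sum_card_fiberwise fun y hy => Finset.mem_image_of_mem _ hy
  rw [hcard]
  refine Finset.dvd_sum fun q hq => ?_
  obtain ⟨y, hyF, hyq⟩ := Finset.mem_image.mp hq
  have hyn : classSize y = n := (Finset.mem_filter.mp hyF).2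
  have : (F.filter fun z => ConjClasses.mk z = q) =
      Finset.univ.filter fun z => IsConj y z := by
    ext z
    simp only [hF, Finset.mem_filter, Finset.mem_univ, true_and, ← hyq,
      ConjClasses.mk_eq_mk_iff_isConj]
    constructor
    · rintro ⟨-, hz⟩; exact hz.symm
    · intro hz; exact ⟨(classSize_conj hz).symm.trans hyn, hz.symm⟩
  rw [this, ← classSize_eq_filter_card, hyn]

end Aux

theorem stmt_5 (p : ℕ) (hp : p.Prime) (G : Type*) [Group G] [Finite G]
    [IsSimpleGroup G] (hna : ¬ ∀ a b : G, a * b = b * a) :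
    sameSizeSet G ≠ {1, p ^ 2, 4 * p ^ 2, 8 * p ^ 2} := by
  classical
  intro hU
  haveI := Fintype.ofFinite G
  -- trivial center
  have hc : Subgroup.center G = ⊥ := by
    rcases Subgroup.Normal.eq_bot_or_eq_top (inferInstance : (Subgroup.center G).Normal) with h | h
    · exact h
    · refine absurd (fun a b => ?_) hna
      exact Subgroup.mem_center_iff.mp (h ▸ Subgroup.mem_top b) a
  have hp2 : 1 < p ^ 2 := Nat.one_lt_pow two_ne_zero hp.one_lt
  -- the count for class size 1 is 1
  have hfil1 : (Finset.univ.filter fun x : G => classSize x = 1) = {1} := by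
    ext x
    simp only [Finset.mem_filter, Finset.mem_univ, true_and, Finset.mem_singleton]
    exact ⟨eq_one_of_classSize_eq_one hc, fun h => h ▸ classSize_one⟩
  have hcount1 : sameSizeCount G 1 = 1 := by
    rw [sameSizeCount_eq_filter_card, hfil1, Finset.card_singleton]
  -- every count is in the set
  have hmem : ∀ x : G, sameSizeCount G (classSize x) ∈
      ({1, p ^ 2, 4 * p ^ 2, 8 * p ^ 2} : Set ℕ) := fun x => hU ▸ ⟨x, rfl⟩
  -- class sizes ≠ 1 have count divisible by p^2
  have hdvd : ∀ x : G, classSize x ≠ 1 → p ^ 2 ∣ sameSizeCount G (classSize x) := by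
    intro x hx1
    rcases hmem x with h | h | h | h
    · exact absurd (Nat.eq_one_of_dvd_one (h ▸ classSize_dvd_sameSizeCount x)) hx1
    · exact h ▸ dvd_rfl
    · exact h ▸ dvd_mul_left (p ^ 2) 4
    · exact h ▸ dvd_mul_left (p ^ 2) 8
  -- |G| = 1 + (multiple of p^2)
  have hsum : Fintype.card G = ∑ n ∈ Finset.univ.image (classSize (G := G)),
      (Finset.univ.filter fun x : G => classSize x = n).card := by
    rw [← Finset.card_univ]
    exact Finset.card_eq_sum_card_fiberwise fun y _ => Finset.mem_image_of_mem _ (Finset.mem_univ y)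
  have h1mem : (1 : ℕ) ∈ Finset.univ.image (classSize (G := G)) := by
    refine Finset.mem_image.mpr ⟨1, Finset.mem_univ _, classSize_one⟩
  have hsplit : Fintype.card G = 1 + ∑ n ∈ (Finset.univ.image (classSize (G := G))).erase 1,
      (Finset.univ.filter fun x : G => classSize x = n).card := by
    rw [hsum, ← Finset.add_sum_erase _ _ h1mem, hfil1, Finset.card_singleton]
  have hS : p ^ 2 ∣ ∑ n ∈ (Finset.univ.image (classSize (G := G))).erase 1,
      (Finset.univ.filter fun x : G => classSize x = n).card := by
    refine Finset.dvd_sum fun n hn => ?_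
    obtain ⟨hn1, hnim⟩ := Finset.mem_erase.mp hn
    obtain ⟨y, -, hy⟩ := Finset.mem_image.mp hnim
    have := hdvd y (hy ▸ hn1)
    rwa [sameSizeCount_eq_filter_card, hy] at this
  -- p does not divide |G|
  have hpG : ¬ p ∣ Fintype.card G := by
    intro hpd
    rw [hsplit] at hpd
    have : p ∣ 1 := (Nat.dvd_add_right ((dvd_pow_self p two_ne_zero).trans hS)).mp
      (by rwa [add_comm] at hpd)
    exact hp.one_lt.ne' (Nat.eq_one_of_dvd_one this)
  -- p^2 is a count, for some class size n; n ∣ p^2 and n ∣ |G|, so n = 1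
  have : (p ^ 2 : ℕ) ∈ sameSizeSet G := by
    rw [hU]; exact Or.inr (Or.inl rfl)
  obtain ⟨x, hx⟩ := this
  have hn_dvd_p2 : classSize x ∣ p ^ 2 := hx ▸ classSize_dvd_sameSizeCount x
  have hn_dvd_G : classSize x ∣ Fintype.card G := by
    rw [← Nat.card_eq_fintype_card]; exact classSize_dvd x
  have hcop : Nat.Coprime (classSize x) p :=
    ((Nat.coprime_or_dvd_of_prime hp (classSize x)).resolve_right
      fun h => hpG (h.trans hn_dvd_G)).symm
  have hn1 : classSize x = 1 := (hcop.pow_right 2).eq_one_of_dvd hn_dvd_p2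
  rw [hn1, hcount1] at hx
  exact hp2.ne' hx
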